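/- arXiv:2008.09531 — 5 statements merged into one kernel-verified Lean document; each statement's English description precedes it below -/
import Mathlib

section
/- Let K be a field of characteristic 0, let m ≥ 2 be even, and let l, n ≥ 1. For every v ∈ ⋀^m K^n one has v^{∧l} = l!·Σ_A hpf^{(m,l)}_A(v)·e_A, where A runs over the (m·l)-element subsets of {1,…,n}. Consequently, v^{∧l} = 0 if and only if hpf^{(m,l)}_A(v) = 0 for every (m·l)-element subset A ⊆ {1,…,n}; that is, the hyper-Pfaffian variety HPf^{(m,l)}(K^n) cut out by all degree-l width-m hyper-Pfaffian forms coincides with the set of vectors of ⋀^m K^n of nilpotency degree l. -/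
open scoped BigOperators

/-- Number of inversions of a list over a linear order. -/
def inversions {α : Type*} [LinearOrder α] (L : List α) : ℕ :=
  (Finset.univ.filter fun p : Fin L.length × Fin L.length =>
    p.1 < p.2 ∧ L.get p.2 < L.get p.1).card

/-- Sign of a list of distinct elements: the sign of the permutation taking the increasing
enumeration of its set of entries to the list itself. -/
def listSign {α : Type*} [LinearOrder α] (L : List α) : ℤ :=
  (-1) ^ inversions L

/-- `sgn(I₁,…,I_l)`: the sign of the permutation of `A = I₁ ∪ ⋯ ∪ I_l` taking the increasing
enumeration of `A` to the concatenation of the increasing enumerations of the blocks. -/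
def blocksSign {α : Type*} [LinearOrder α] (Is : List (Finset α)) : ℤ :=
  listSign (Is.flatMap fun I => I.sort (· ≤ ·))

/-- The (unordered) hyper-Pfaffian form `hpf^{(m,l)}_A` evaluated at the coordinate vector
`c`: the sum over all unordered partitions of `A` into `m`-element blocks — each partition
represented by the unique ordered tuple whose blocks have strictly increasing minima — of
`sgn(I₁,…,I_l)·c(I₁)⋯c(I_l)`. -/
noncomputable def hpfEval (K : Type*) [Field K] {α : Type*} [LinearOrder α]
    (m l : ℕ) (A : Finset α) (c : Finset α → K) : K :=
  ∑ f ∈ Fintype.piFinset (fun _ : Fin l => Finset.powersetCard m A),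
    if (∀ i j : Fin l, i ≠ j → Disjoint (f i) (f j)) ∧ Finset.univ.sup f = A ∧
        (∀ i j : Fin l, i < j → (f i).min < (f j).min) then
      (blocksSign (List.ofFn f) : K) * ∏ t, c (f t)
    else 0

/-- The basis wedge `e_I = e_{i₁}∧⋯∧e_{i_k}` (for `I = {i₁<⋯<i_k}`) in the exterior algebra
of `K^n = Fin n → K`. -/
noncomputable def eWedge (K : Type*) [Field K] (n : ℕ) (I : Finset (Fin n)) :
    ExteriorAlgebra K (Fin n → K) :=
  ((I.sort (· ≤ ·)).map fun i => ExteriorAlgebra.ι K (Pi.single i 1)).prod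

/-!
Expanding `v^l` by multilinearity gives a sum over ordered `l`-tuples of `m`-blocks of
`c(I₁)⋯c(I_l)·e_{I₁}⋯e_{I_l}`. A tuple with two overlapping blocks contributes `0`. Since the
blocks have even size, the `e_I` commute, so reordering a tuple of disjoint blocks does not change
its term and every unordered partition occurs exactly `l!` times; representing it by the tuple
with increasing minima, its term is `sgn(I₁,…,I_l)·c(I₁)⋯c(I_l)·e_A` with `A` the union of the
blocks. Grouping by `A` gives `l!·Σ_A hpf_A(v)·e_A`; as the `e_A` form a basis of the exterior
algebra and `l! ≠ 0`, this vanishes exactly when every `hpf_A(v)` does.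
-/

open Finset

theorem List.length_filter_eq_card_get {α : Type*} (p : α → Prop) [DecidablePred p]
    (L : List α) : (L.filter p).length = #{i : Fin L.length | p (L.get i)} := by
  induction L with
  | nil => simp
  | cons a L ih =>
    simp only [List.length_cons]
    rw [Fin.card_filter_univ_succ', List.filter_cons]
    split_ifs with h <;> simp_all [add_comm]

section ListSign
variable {α : Type*} [LinearOrder α]

lemma inversions_cons (a : α) (L : List α) :
    inversions (a :: L) = (L.filter (· < a)).length + inversions L := by
  rw [inversions, inversions, card_filter, card_filter, Fintype.sum_prod_type,
    Fintype.sum_prod_type, List.length_filter_eq_card_get, card_filter]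
  simp only [List.length_cons]
  simp [Fin.sum_univ_succ, Fin.succ_lt_succ_iff, - sum_boole]

lemma listSign_cons (a : α) (L : List α) :
    listSign (a :: L) = (-1) ^ (L.filter (· < a)).length * listSign L := by
  rw [listSign, listSign, inversions_cons, pow_add]

end ListSign

theorem Finset.sum_pow_eq_sum_piFinset_prod_ofFn {κ R : Type*} [Semiring R] (s : Finset κ)
    (x : κ → R) (l : ℕ) :
    (∑ a ∈ s, x a) ^ l = ∑ p ∈ Fintype.piFinset fun _ : Fin l => s, (List.ofFn (x ∘ p)).prod := by
  induction l with
  | zero => simp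
  | succ l ih =>
    rw [pow_succ', ih, sum_mul_sum, ← sum_product']
    have hcons := filter_piFinset_eq_map_consEquiv (fun _ : Fin (l + 1) => s) fun _ => True
    simp only [filter_true] at hcons
    rw [hcons, sum_map]
    simp [List.ofFn_succ]
    rfl

theorem List.prod_ofFn_smul {R A : Type*} [CommSemiring R] [Semiring A] [Algebra R A] {l : ℕ}
    (c : Fin l → R) (w : Fin l → A) :
    (List.ofFn fun i => c i • w i).prod = (∏ i, c i) • (List.ofFn w).prod := by
  induction l with
  | zero => simp
  | succ l ih =>
    simp only [List.ofFn_succ, List.prod_cons, ih, Fin.prod_univ_succ, smul_mul_smul_comm]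

theorem Equiv.Perm.eq_one_of_strictMono_comp {γ : Type*} [LinearOrder γ] {l : ℕ}
    {g : Fin l → γ} (hg : StrictMono g) {τ : Equiv.Perm (Fin l)} (hgτ : StrictMono (g ∘ τ)) :
    τ = 1 :=
  Equiv.ext fun i =>
    hg.injective (congrFun (Tuple.unique_monotone (τ := 1) hgτ.monotone hg.monotone) i)

theorem Finset.sum_eq_factorial_smul_sum_strictMono {β γ A : Type*} [LinearOrder γ]
    [AddCommMonoid A] {l : ℕ} (key : β → γ) (S : Finset (Fin l → β))
    (hS : ∀ f ∈ S, ∀ σ : Equiv.Perm (Fin l), f ∘ σ ∈ S)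
    (hkey : ∀ f ∈ S, Function.Injective (key ∘ f)) (G : (Fin l → β) → A)
    (hG : ∀ f ∈ S, ∀ σ : Equiv.Perm (Fin l), G (f ∘ σ) = G f) :
    ∑ f ∈ S, G f = l.factorial • ∑ f ∈ S with StrictMono (key ∘ f), G f := by
  set S' := {f ∈ S | StrictMono (key ∘ f)}
  -- each `f ∈ S` is uniquely `g ∘ σ` with `g ∈ S'`: sort `f` by `key`
  have hbij : ∑ p ∈ (univ : Finset (Equiv.Perm (Fin l))) ×ˢ S', G (p.2 ∘ p.1) =
      ∑ f ∈ S, G f := by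
    refine sum_bij (fun p _ => p.2 ∘ p.1) ?_ ?_ ?_ fun _ _ => rfl
    · rintro ⟨σ, f⟩ hp
      exact hS f (mem_filter.mp (mem_product.mp hp).2).1 σ
    · rintro ⟨σ₁, f₁⟩ hp₁ ⟨σ₂, f₂⟩ hp₂ (h : f₁ ∘ σ₁ = f₂ ∘ σ₂)
      obtain ⟨-, hf₁⟩ := mem_filter.mp (mem_product.mp hp₁).2
      obtain ⟨-, hf₂⟩ := mem_filter.mp (mem_product.mp hp₂).2
      have hf : f₂ ∘ ⇑(σ₂ * σ₁⁻¹) = f₁ := by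
        funext i
        simpa using (congrFun h (σ₁⁻¹ i)).symm
      have hσ : σ₂ * σ₁⁻¹ = 1 :=
        Equiv.Perm.eq_one_of_strictMono_comp hf₂ (by rwa [Function.comp_assoc, hf])
      rw [mul_inv_eq_one] at hσ
      subst hσ
      simp [← hf]
    · intro g hg
      set τ := Tuple.sort (key ∘ g)
      have hmono : StrictMono (key ∘ g ∘ τ) :=
        (Tuple.monotone_sort (key ∘ g)).strictMono_of_injective (hkey _ (hS g hg τ))
      refine ⟨(τ⁻¹, g ∘ τ), ?_, by ext; simp⟩
      exact mem_product.mpr ⟨mem_univ _, mem_filter.mpr ⟨hS g hg τ, hmono⟩⟩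
  rw [← hbij, sum_product,
    sum_congr rfl fun σ _ => sum_congr rfl fun f hf => hG f (mem_filter.mp hf).1 σ,
    sum_const, card_univ, Fintype.card_perm, Fintype.card_fin]

section Blocks
variable {α : Type*} [LinearOrder α]

lemma Finset.card_sup_of_pairwise_disjoint {ι : Type*} [Fintype ι] {f : ι → Finset α}
    {m : ℕ} (hf : ∀ i, #(f i) = m) (hd : Pairwise (Function.onFun Disjoint f)) :
    #(univ.sup f) = m * Fintype.card ι := by
  rw [sup_eq_biUnion, card_biUnion fun i _ j _ hij => hd hij]
  simp [hf, mul_comm]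

lemma Finset.injective_min_of_pairwise_disjoint {ι : Type*} {f : ι → Finset α}
    (hne : ∀ i, (f i).Nonempty) (hd : Pairwise (Function.onFun Disjoint f)) :
    Function.Injective fun i => (f i).min := by
  intro i j h
  by_contra hij
  have hmin : (f i).min' (hne i) = (f j).min' (hne j) :=
    WithTop.coe_injective (by simpa only [coe_min'] using h)
  exact disjoint_left.mp (hd hij) (min'_mem _ _) (by rw [hmin]; exact min'_mem _ _)

def concatSorted {l : ℕ} (f : Fin l → Finset α) : List α :=
  (List.ofFn f).flatMap (·.sort (· ≤ ·))

lemma blocksSign_ofFn {l : ℕ} (f : Fin l → Finset α) :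
    blocksSign (List.ofFn f) = listSign (concatSorted f) := rfl

lemma nodup_concatSorted_iff {l : ℕ} {f : Fin l → Finset α} :
    (concatSorted f).Nodup ↔ ∀ i j, i ≠ j → Disjoint (f i) (f j) := by
  have hsort : ∀ s t : Finset α,
      List.Disjoint (s.sort (· ≤ ·)) (t.sort (· ≤ ·)) ↔ Disjoint s t := by
    simp [List.disjoint_left, Finset.disjoint_left]
  simp only [concatSorted, List.nodup_flatMap, sort_nodup, implies_true, true_and,
    List.pairwise_ofFn, Function.onFun, hsort]
  refine ⟨fun h i j hij => ?_, fun h i j hij => h i j hij.ne⟩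
  rcases hij.lt_or_gt with hlt | hlt
  exacts [h hlt, (h hlt).symm]

lemma toFinset_concatSorted {l : ℕ} (f : Fin l → Finset α) :
    (concatSorted f).toFinset = univ.sup f := by
  ext x
  simp [concatSorted]

end Blocks

namespace ExteriorAlgebra

variable (R : Type*) {M α : Type*} [CommRing R] [AddCommGroup M] [Module R M] (v : α → M)

noncomputable def listWedge (L : List α) : ExteriorAlgebra R M :=
  (L.map fun i => ι R (v i)).prod

@[simp] lemma listWedge_nil : listWedge R v [] = 1 := rfl

@[simp] lemma listWedge_cons (a : α) (L : List α) :
    listWedge R v (a :: L) = ι R (v a) * listWedge R v L := by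
  simp [listWedge]

@[simp] lemma listWedge_append (L₁ L₂ : List α) :
    listWedge R v (L₁ ++ L₂) = listWedge R v L₁ * listWedge R v L₂ := by
  simp [listWedge]

lemma listWedge_flatMap {β : Type*} (L : List β) (g : β → List α) :
    listWedge R v (L.flatMap g) = (L.map fun b => listWedge R v (g b)).prod := by
  induction L with
  | nil => rfl
  | cons b L ih => simp [ih]

lemma listWedge_eq_ιMulti (L : List α) :
    listWedge R v L = ιMulti R L.length (fun i => v (L.get i)) := by
  rw [ιMulti_apply, listWedge]
  conv_lhs => rw [← List.ofFn_get L]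
  rw [List.map_ofFn]
  rfl

lemma listWedge_eq_zero_of_not_nodup {L : List α} (hL : ¬L.Nodup) : listWedge R v L = 0 := by
  rw [listWedge_eq_ιMulti]
  refine ιMulti_eq_zero_of_not_inj fun h => hL ?_
  exact List.nodup_iff_injective_get.mpr h.of_comp

lemma ι_mul_listWedge (x : M) (L : List α) :
    ι R x * listWedge R v L = (-1 : ℤ) ^ L.length • (listWedge R v L * ι R x) := by
  induction L with
  | nil => simp
  | cons a L ih =>
    rw [listWedge_cons, ← mul_assoc, ← neg_eq_of_add_eq_zero_left (ι_add_mul_swap x (v a)),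
      neg_mul, mul_assoc, ih, mul_smul_comm, ← neg_smul, List.length_cons, pow_succ, mul_neg_one,
      mul_assoc]

lemma commute_listWedge_of_even {L : List α} (hL : Even L.length) (L' : List α) :
    Commute (listWedge R v L) (listWedge R v L') := by
  refine Commute.list_prod_right _ _ fun y hy => ?_
  obtain ⟨a, -, rfl⟩ := List.mem_map.mp hy
  rw [Commute, SemiconjBy, ι_mul_listWedge, hL.neg_one_pow, one_smul]

variable [LinearOrder α]

noncomputable def finsetWedge (s : Finset α) : ExteriorAlgebra R M :=
  listWedge R v (s.sort (· ≤ ·))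

lemma finsetWedge_insert_of_lt {a : α} {s : Finset α} (h : ∀ x ∈ s, a < x) :
    finsetWedge R v (insert a s) = ι R (v a) * finsetWedge R v s := by
  rw [finsetWedge, sort_insert _ (fun x hx => (h x hx).le) (fun ha => lt_irrefl a (h a ha)),
    listWedge_cons, finsetWedge]

lemma ι_mul_finsetWedge {a : α} {s : Finset α} (ha : a ∉ s) :
    ι R (v a) * finsetWedge R v s =
      (-1 : ℤ) ^ #{x ∈ s | x < a} • finsetWedge R v (insert a s) := by
  induction s using Finset.induction_on_min with
  | empty => simp [finsetWedge]
  | insert b s hb ih =>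
    have hab : a ≠ b := fun h => ha (h ▸ mem_insert_self b s)
    have has : a ∉ s := fun h => ha (mem_insert_of_mem h)
    rcases hab.lt_or_gt with hlt | hgt
    · have hfilter : {x ∈ insert b s | x < a} = ∅ := by
        refine filter_eq_empty_iff.mpr fun x hx => not_lt.mpr ?_
        rcases mem_insert.mp hx with rfl | hx
        exacts [hlt.le, (hlt.trans (hb x hx)).le]
      rw [hfilter, card_empty, pow_zero, one_smul,
        finsetWedge_insert_of_lt R v (s := insert b s)]
      intro x hx
      rcases mem_insert.mp hx with rfl | hx
      exacts [hlt, hlt.trans (hb x hx)]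
    · have hcard : #{x ∈ insert b s | x < a} = #{x ∈ s | x < a} + 1 := by
        rw [filter_insert, if_pos hgt,
          card_insert_of_notMem (fun h => lt_irrefl b (hb b (mem_filter.mp h).1))]
      rw [finsetWedge_insert_of_lt R v hb, ← mul_assoc,
        ← neg_eq_of_add_eq_zero_left (ι_add_mul_swap (v a) (v b)), neg_mul, mul_assoc, ih has,
        insert_comm, finsetWedge_insert_of_lt R v (s := insert a s), hcard, pow_succ, mul_neg_one,
        neg_smul, mul_smul_comm]
      intro x hx
      rcases mem_insert.mp hx with rfl | hx
      exacts [hgt, hb x hx]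

lemma listWedge_eq_listSign_smul {L : List α} (hL : L.Nodup) :
    listWedge R v L = listSign L • finsetWedge R v L.toFinset := by
  induction L with
  | nil => simp [listSign, inversions, finsetWedge]
  | cons a L ih =>
    obtain ⟨ha, hL⟩ := List.nodup_cons.mp hL
    have hcount : #{x ∈ L.toFinset | x < a} = (L.filter (· < a)).length := by
      rw [← List.toFinset_card_of_nodup (hL.filter _), List.toFinset_filter]
      simp
    rw [listWedge_cons, ih hL, mul_smul_comm, ι_mul_finsetWedge R v (by simpa using ha),
      listSign_cons, List.toFinset_cons, hcount, smul_smul, mul_comm]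

lemma commute_finsetWedge_of_even {s : Finset α} (hs : Even #s) (t : Finset α) :
    Commute (finsetWedge R v s) (finsetWedge R v t) :=
  commute_listWedge_of_even R v (by rwa [length_sort]) _

lemma prod_ofFn_smul_finsetWedge {l : ℕ} (c : Finset α → R) (f : Fin l → Finset α) :
    (List.ofFn fun t => c (f t) • finsetWedge R v (f t)).prod
      = (∏ t, c (f t)) • listWedge R v (concatSorted f) := by
  rw [concatSorted, listWedge_flatMap, List.map_ofFn, List.prod_ofFn_smul]
  rfl

variable {R} in
lemma finsetWedge_basis (b : Module.Basis α R M) (s : Finset α) :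
    finsetWedge R b s = b.ExteriorAlgebra s := by
  rw [basis_apply_ofCard b (length_sort (· ≤ ·)).symm, finsetWedge, listWedge_eq_ιMulti]
  congr 1

end ExteriorAlgebra

section HyperPfaffian
open ExteriorAlgebra
variable {K M α : Type*} [Field K] [AddCommGroup M] [Module K M] [LinearOrder α] (v : α → M)

lemma sum_filter_sup_eq_hpfEval {m l : ℕ} {s A : Finset α} (hA : A ⊆ s) (c : Finset α → K) :
    ∑ f ∈ Fintype.piFinset (fun _ : Fin l => powersetCard m s) with
        ((∀ i j, i ≠ j → Disjoint (f i) (f j)) ∧ StrictMono (Finset.min ∘ f)) ∧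
          univ.sup f = A,
      (blocksSign (List.ofFn f) : K) * ∏ t, c (f t) = hpfEval K m l A c := by
  rw [hpfEval, ← sum_filter]
  refine sum_congr (ext fun f => ?_) fun _ _ => rfl
  simp only [mem_filter, Fintype.mem_piFinset, mem_powersetCard]
  constructor
  · rintro ⟨hf, ⟨hd, hmono⟩, rfl⟩
    exact ⟨fun i => ⟨le_sup (mem_univ i), (hf i).2⟩, hd, rfl, fun i j hij => hmono hij⟩
  · rintro ⟨hf, hd, rfl, hmono⟩
    exact ⟨fun i => ⟨(hf i).1.trans hA, (hf i).2⟩, ⟨hd, fun i j hij => hmono i j hij⟩,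
      rfl⟩

lemma sum_smul_finsetWedge_sup_eq_sum_hpfEval {m l : ℕ} (s : Finset α) (c : Finset α → K) :
    ∑ f ∈ Fintype.piFinset (fun _ : Fin l => powersetCard m s) with
        (∀ i j, i ≠ j → Disjoint (f i) (f j)) ∧ StrictMono (Finset.min ∘ f),
      ((blocksSign (List.ofFn f) : K) * ∏ t, c (f t)) • finsetWedge K v (univ.sup f)
      = ∑ A ∈ powersetCard (m * l) s, hpfEval K m l A c • finsetWedge K v A := by
  have hmaps : ∀ f ∈ {f ∈ Fintype.piFinset (fun _ : Fin l => powersetCard m s) |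
      (∀ i j, i ≠ j → Disjoint (f i) (f j)) ∧ StrictMono (Finset.min ∘ f)},
      univ.sup f ∈ powersetCard (m * l) s := by
    intro f hf
    simp only [mem_filter, Fintype.mem_piFinset, mem_powersetCard] at hf
    obtain ⟨hf, hd, -⟩ := hf
    refine mem_powersetCard.mpr ⟨Finset.sup_le fun i _ => (hf i).1, ?_⟩
    rw [card_sup_of_pairwise_disjoint (fun i => (hf i).2) hd, Fintype.card_fin]
  rw [← sum_fiberwise_of_maps_to hmaps]
  refine sum_congr rfl fun A hA => ?_
  rw [sum_congr rfl fun f hf => by rw [(mem_filter.mp hf).2], ← sum_smul, filter_filter,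
    sum_filter_sup_eq_hpfEval (mem_powersetCard.mp hA).1]

lemma prod_ofFn_smul_finsetWedge_of_disjoint {l : ℕ} (c : Finset α → K)
    {f : Fin l → Finset α} (hd : ∀ i j, i ≠ j → Disjoint (f i) (f j)) :
    (List.ofFn fun t => c (f t) • finsetWedge K v (f t)).prod
      = ((blocksSign (List.ofFn f) : K) * ∏ t, c (f t)) • finsetWedge K v (univ.sup f) := by
  rw [prod_ofFn_smul_finsetWedge, listWedge_eq_listSign_smul K v (nodup_concatSorted_iff.mpr hd),
    toFinset_concatSorted, ← Int.cast_smul_eq_zsmul K, smul_smul, mul_comm, blocksSign_ofFn]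

theorem sum_smul_finsetWedge_pow {m : ℕ} (hm : Even m) (hm0 : m ≠ 0) (s : Finset α)
    (c : Finset α → K) (l : ℕ) :
    (∑ I ∈ powersetCard m s, c I • finsetWedge K v I) ^ l = (l.factorial : K) •
      ∑ A ∈ powersetCard (m * l) s, hpfEval K m l A c • finsetWedge K v A := by
  set x : Finset α → ExteriorAlgebra K M := fun I => c I • finsetWedge K v I
  set P := Fintype.piFinset fun _ : Fin l => powersetCard m s
  set D := {f ∈ P | ∀ i j, i ≠ j → Disjoint (f i) (f j)}
  have hcard : ∀ f ∈ P, ∀ i, #(f i) = m := fun f hf i =>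
    (mem_powersetCard.mp (Fintype.mem_piFinset.mp hf i)).2
  have hvanish : ∀ f ∈ P, (List.ofFn (x ∘ f)).prod ≠ 0 →
      ∀ i j, i ≠ j → Disjoint (f i) (f j) := by
    intro f _ hne
    by_contra hd
    rw [Function.comp_def, prod_ofFn_smul_finsetWedge,
      listWedge_eq_zero_of_not_nodup K v (mt nodup_concatSorted_iff.mp hd), smul_zero] at hne
    exact hne rfl
  have hD_perm : ∀ f ∈ D, ∀ σ : Equiv.Perm (Fin l), f ∘ σ ∈ D := by
    intro f hf σ
    obtain ⟨hfP, hd⟩ := mem_filter.mp hf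
    exact mem_filter.mpr ⟨Fintype.mem_piFinset.mpr fun i => Fintype.mem_piFinset.mp hfP (σ i),
      fun i j hij => hd (σ i) (σ j) (σ.injective.ne hij)⟩
  have hD_min : ∀ f ∈ D, Function.Injective (Finset.min ∘ f) := by
    intro f hf
    obtain ⟨hfP, hd⟩ := mem_filter.mp hf
    refine injective_min_of_pairwise_disjoint (fun i => card_pos.mp ?_) fun i j => hd i j
    rw [hcard f hfP i]
    exact Nat.pos_of_ne_zero hm0
  have hD_prod : ∀ f ∈ D, ∀ σ : Equiv.Perm (Fin l),
      (List.ofFn (x ∘ f ∘ σ)).prod = (List.ofFn (x ∘ f)).prod := by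
    intro f hf σ
    refine (σ.ofFn_comp_perm (x ∘ f)).prod_eq' (List.pairwise_ofFn.mpr fun i j _ => ?_)
    rw [← hcard f (mem_filter.mp hf).1 (σ i)] at hm
    exact ((commute_finsetWedge_of_even K v hm _).smul_left _).smul_right _
  calc (∑ I ∈ powersetCard m s, x I) ^ l
      = ∑ f ∈ P, (List.ofFn (x ∘ f)).prod := sum_pow_eq_sum_piFinset_prod_ofFn _ _ _
    _ = ∑ f ∈ D, (List.ofFn (x ∘ f)).prod := (sum_filter_of_ne hvanish).symm
    _ = l.factorial •
          ∑ f ∈ D with StrictMono (Finset.min ∘ f), (List.ofFn (x ∘ f)).prod :=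
        sum_eq_factorial_smul_sum_strictMono _ _ hD_perm hD_min _ hD_prod
    _ = _ := by
        rw [filter_filter, ← sum_smul_finsetWedge_sup_eq_sum_hpfEval, Nat.cast_smul_eq_nsmul]
        refine congrArg _ (sum_congr rfl fun f hf => ?_)
        exact prod_ofFn_smul_finsetWedge_of_disjoint v c (mem_filter.mp hf).2.1

end HyperPfaffian

theorem pow_eq_factorial_smul_sum_hpf_general (K : Type*) [Field K] [CharZero K]
    (m l n : ℕ) (hm : Even m) (hm2 : 2 ≤ m)
    (c : Finset (Fin n) → K)
    (v : ExteriorAlgebra K (Fin n → K))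
    (hv : v = ∑ I ∈ Finset.powersetCard m (Finset.univ : Finset (Fin n)),
      c I • eWedge K n I) :
    v ^ l = (l.factorial : K) •
        ∑ A ∈ Finset.powersetCard (m * l) (Finset.univ : Finset (Fin n)),
          hpfEval K m l A c • eWedge K n A ∧
    (v ^ l = 0 ↔
      ∀ A ∈ Finset.powersetCard (m * l) (Finset.univ : Finset (Fin n)),
        hpfEval K m l A c = 0) := by
  have hpow : v ^ l = (l.factorial : K) • ∑ A ∈ powersetCard (m * l) univ,
      hpfEval K m l A c • eWedge K n A := by
    rw [hv]
    exact sum_smul_finsetWedge_pow (fun i => Pi.single i 1) hm (by omega) univ c l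
  have hbasis : ∀ A, eWedge K n A = (Pi.basisFun K (Fin n)).ExteriorAlgebra A := fun A => by
    simp [← ExteriorAlgebra.finsetWedge_basis, eWedge, ExteriorAlgebra.finsetWedge,
      ExteriorAlgebra.listWedge]
  refine ⟨hpow, fun h => ?_, fun h => ?_⟩
  · rw [hpow, smul_eq_zero, or_iff_right (Nat.cast_ne_zero.mpr l.factorial_ne_zero)] at h
    simp only [hbasis] at h
    exact linearIndependent_iff'.mp (Pi.basisFun K (Fin n)).ExteriorAlgebra.linearIndependent _ _ h
  · rw [hpow, sum_eq_zero fun A hA => by rw [h A hA, zero_smul], smul_zero]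

/-- For even `m ≥ 2` and `v = Σ_I c(I)·e_I ∈ ⋀^m K^n`, one has
`v^{∧l} = l!·Σ_A hpf^{(m,l)}_A(v)·e_A`, and consequently `v^{∧l} = 0` iff all the
hyper-Pfaffian forms `hpf^{(m,l)}_A` vanish at `v`. -/
theorem pow_eq_factorial_smul_sum_hpf (K : Type*) [Field K] [CharZero K]
    (m l n : ℕ) (hm : Even m) (hm2 : 2 ≤ m) (hl : 1 ≤ l) (hn : 1 ≤ n)
    (c : Finset (Fin n) → K)
    (v : ExteriorAlgebra K (Fin n → K))
    (hv : v = ∑ I ∈ Finset.powersetCard m (Finset.univ : Finset (Fin n)),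
      c I • eWedge K n I) :
    v ^ l = (l.factorial : K) •
        ∑ A ∈ Finset.powersetCard (m * l) (Finset.univ : Finset (Fin n)),
          hpfEval K m l A c • eWedge K n A ∧
    (v ^ l = 0 ↔
      ∀ A ∈ Finset.powersetCard (m * l) (Finset.univ : Finset (Fin n)),
        hpfEval K m l A c = 0) :=
  pow_eq_factorial_smul_sum_hpf_general K m l n hm hm2 c v hv
end

section
/- Let K be a field of characteristic 0, let V be a K-vector space, and let p, k ≥ 1. Suppose ω₁,…,ω_k ∈ ⋀^p V are such that each ω_i can be written as ω_i = α_i ∧ γ_i with α_i ∈ ⋀^{a_i} V for some ODD integer a_i ≥ 1 and γ_i ∈ ⋀^{p−a_i} V. Then (ω₁ + ⋯ + ω_k)^{∧(k+1)} = 0 in ⋀^{p(k+1)} V. In particular, any element of ⋀^p V that is a sum of k decomposable elements of type π for an odd partition π of p (i.e., a partition having at least one odd part) has nilpotency degree at most k+1. -/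
/-!
Elements of `⋀^m` and `⋀^n` commute up to the sign `(-1)^(mn)`, and every element of odd degree
squares to zero (by induction on sums, as the cross terms of `(x + y)^2` cancel). Hence
each `ω_i = α_i ∧ γ_i` squares to zero. If `p` is even the `ω_i` commute, and a sum of `k`
commuting square-zero elements has vanishing `(k+1)`-st power; if `p` is odd the sum itself has
odd degree, so already its square vanishes.
-/

namespace ExteriorAlgebra

variable {R M : Type*} [CommRing R] [AddCommGroup M] [Module R M]

theorem ι_mul_comm_of_mem_exteriorPower (v : M) {n : ℕ} {y : ExteriorAlgebra R M}
    (hy : y ∈ ⋀[R]^n M) : ι R v * y = (-1 : ℤ) ^ n • (y * ι R v) := by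
  induction hy using Submodule.pow_induction_on_left' with
  | algebraMap r => simp [Algebra.commutes]
  | add x y i _ _ ihx ihy => rw [mul_add, add_mul, smul_add, ihx, ihy]
  | mem_mul _ hw i x _ ih =>
    obtain ⟨w, rfl⟩ := hw
    have hvw : ι R v * ι R w = -(ι R w * ι R v) :=
      eq_neg_of_add_eq_zero_left (ι_add_mul_swap v w)
    calc ι R v * (ι R w * x) = -(ι R w * (ι R v * x)) := by
          rw [← mul_assoc, hvw, neg_mul, mul_assoc]
      _ = (-1 : ℤ) ^ (i + 1) • (ι R w * x * ι R v) := by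
        rw [ih, mul_smul_comm, pow_succ, mul_neg_one, neg_smul, mul_assoc]

theorem mul_comm_of_mem_exteriorPower {m n : ℕ} {x y : ExteriorAlgebra R M}
    (hx : x ∈ ⋀[R]^m M) (hy : y ∈ ⋀[R]^n M) : x * y = (-1 : ℤ) ^ (m * n) • (y * x) := by
  induction hx using Submodule.pow_induction_on_left' with
  | algebraMap r => simp [Algebra.commutes]
  | add x x' i _ _ ihx ihx' => rw [add_mul, mul_add, smul_add, ihx, ihx']
  | mem_mul _ hv i x _ ih =>
    obtain ⟨v, rfl⟩ := hv
    rw [mul_assoc, ih, mul_smul_comm, ← mul_assoc, ι_mul_comm_of_mem_exteriorPower v hy,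
      smul_mul_assoc, smul_smul, ← pow_add, mul_assoc, Nat.succ_mul, add_comm (i * n)]

theorem mul_self_eq_zero_of_odd {m : ℕ} (hm : Odd m) {x : ExteriorAlgebra R M}
    (hx : x ∈ ⋀[R]^m M) : x * x = 0 := by
  induction hx using Submodule.pow_induction_on_left' with
  | algebraMap => simp at hm
  | add x y i hx hy ihx ihy =>
    have hxy : x * y = -(y * x) := by
      rw [mul_comm_of_mem_exteriorPower hx hy, (hm.mul hm).neg_one_pow, neg_one_smul]
    rw [add_mul, mul_add, mul_add, ihx hm, ihy hm, hxy]
    abel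
  | mem_mul _ hv i x hx _ =>
    obtain ⟨v, rfl⟩ := hv
    have hi : Even i := Nat.not_odd_iff_even.mp (Nat.odd_add_one.mp hm)
    have hxv : x * ι R v = ι R v * x := by
      rw [ι_mul_comm_of_mem_exteriorPower v hx, hi.neg_one_pow, one_smul]
    calc ι R v * x * (ι R v * x) = ι R v * (x * ι R v) * x := by simp only [mul_assoc]
      _ = 0 := by rw [hxv, ← mul_assoc, ι_sq_zero, zero_mul, zero_mul]

theorem mul_self_eq_zero_of_odd_factor {m n : ℕ} (hm : Odd m) {x y : ExteriorAlgebra R M}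
    (hx : x ∈ ⋀[R]^m M) (hy : y ∈ ⋀[R]^n M) : x * y * (x * y) = 0 := by
  calc x * y * (x * y) = x * (y * x) * y := by simp only [mul_assoc]
    _ = (-1 : ℤ) ^ (n * m) • (x * x * (y * y)) := by
      rw [mul_comm_of_mem_exteriorPower hy hx, mul_smul_comm, smul_mul_assoc]
      simp only [mul_assoc]
    _ = 0 := by rw [mul_self_eq_zero_of_odd hm hx, zero_mul, smul_zero]

end ExteriorAlgebra

theorem Finset.sum_pow_card_add_one_eq_zero {ι A : Type*} [Semiring A] [DecidableEq ι]
    (s : Finset ι) (f : ι → A) (hcomm : ∀ i ∈ s, ∀ j ∈ s, Commute (f i) (f j))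
    (hsq : ∀ i ∈ s, f i * f i = 0) : (∑ i ∈ s, f i) ^ (s.card + 1) = 0 := by
  induction s using Finset.induction_on with
  | empty => simp
  | insert a s ha ih =>
    have hrest : (∑ i ∈ s, f i) ^ (s.card + 1) = 0 :=
      ih (fun i hi j hj => hcomm i (mem_insert_of_mem hi) j (mem_insert_of_mem hj))
        (fun i hi => hsq i (mem_insert_of_mem hi))
    have ha_comm : Commute (f a) (∑ i ∈ s, f i) :=
      Commute.sum_right _ _ _ fun i hi => hcomm a (mem_insert_self a s) i (mem_insert_of_mem hi)
    rw [sum_insert ha, card_insert_of_notMem ha]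
    exact ha_comm.add_pow_eq_zero_of_add_le_succ_of_pow_eq_zero
      (by rw [sq, hsq a (mem_insert_self a s)]) hrest (by omega)

open ExteriorAlgebra in
theorem sum_pow_succ_eq_zero_of_odd_factor_general (K V : Type*) [Field K]
    [AddCommGroup V] [Module K V]
    (p k : ℕ) (hk : 1 ≤ k)
    (ω α γ : Fin k → ExteriorAlgebra K V) (a : Fin k → ℕ)
    (ha_odd : ∀ i, Odd (a i)) (hap : ∀ i, a i ≤ p)
    (hα : ∀ i, α i ∈ ⋀[K]^(a i) V)
    (hγ : ∀ i, γ i ∈ ⋀[K]^(p - a i) V)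
    (hω : ∀ i, ω i = α i * γ i) :
    (∑ i, ω i) ^ (k + 1) = 0 := by
  have hωp : ∀ i, ω i ∈ ⋀[K]^p V := fun i => by
    simpa [hω i, Nat.add_sub_cancel' (hap i)] using SetLike.mul_mem_graded (hα i) (hγ i)
  rcases Nat.even_or_odd p with hp_even | hp_odd
  · have hcomm : ∀ i j, Commute (ω i) (ω j) := fun i j => by
      simpa [Commute, SemiconjBy, (hp_even.mul_right p).neg_one_pow] using
        mul_comm_of_mem_exteriorPower (hωp i) (hωp j)
    have hsq : ∀ i, ω i * ω i = 0 := fun i => by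
      rw [hω i]; exact mul_self_eq_zero_of_odd_factor (ha_odd i) (hα i) (hγ i)
    simpa using Finset.univ.sum_pow_card_add_one_eq_zero ω (fun i _ j _ => hcomm i j)
      (fun i _ => hsq i)
  · have hS : (∑ i, ω i) * (∑ i, ω i) = 0 :=
      mul_self_eq_zero_of_odd hp_odd (Submodule.sum_mem _ fun i _ => hωp i)
    exact pow_eq_zero_of_le (m := 2) (by omega) (by rwa [sq])

/-- If each `ω_i ∈ ⋀^p V` factors as `ω_i = α_i ∧ γ_i` with
`α_i ∈ ⋀^{a_i} V` for some odd `a_i ≥ 1` and `γ_i ∈ ⋀^{p−a_i} V`, then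
`(ω₁ + ⋯ + ω_k)^{∧(k+1)} = 0`. In particular, a sum of `k` decomposable elements of an odd
partition type has nilpotency degree at most `k + 1`. -/
theorem sum_pow_succ_eq_zero_of_odd_factor (K V : Type*) [Field K] [CharZero K]
    [AddCommGroup V] [Module K V]
    (p k : ℕ) (hp : 1 ≤ p) (hk : 1 ≤ k)
    (ω α γ : Fin k → ExteriorAlgebra K V) (a : Fin k → ℕ)
    (ha_odd : ∀ i, Odd (a i)) (ha1 : ∀ i, 1 ≤ a i) (hap : ∀ i, a i ≤ p)
    (hα : ∀ i, α i ∈ ⋀[K]^(a i) V)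
    (hγ : ∀ i, γ i ∈ ⋀[K]^(p - a i) V)
    (hω : ∀ i, ω i = α i * γ i) :
    (∑ i, ω i) ^ (k + 1) = 0 :=
  sum_pow_succ_eq_zero_of_odd_factor_general K V p k hk ω α γ a ha_odd hap hα hγ hω
end

section
/- Let K be an infinite field, let n, p ≥ 1, let ω ∈ ⋀^p K^n, and let F₁, F₂ : ⋀^p K^n → K be polynomial functions (i.e., each is given by evaluating a polynomial in the coordinates with respect to the standard basis of ⋀^p K^n). Suppose there exist invertible linear maps g₁, g₂ ∈ GL_n(K) such that F₁((⋀^p g₁)(ω)) ≠ 0 and F₂((⋀^p g₂)(ω)) ≠ 0. Then there exist scalars λ, μ ∈ K such that the linear map g = λ·g₁ + μ·g₂ is invertible and simultaneously F₁((⋀^p g)(ω)) ≠ 0 and F₂((⋀^p g)(ω)) ≠ 0. -/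
open MvPolynomial

section PolynomialFunctions

variable (σ K : Type*) [Field K]

noncomputable def mvPolynomialFunctions : Subalgebra K ((σ → K) → K) :=
  (AlgHom.pi fun x : σ → K => aeval (R := K) x).range

variable {σ K}

namespace mvPolynomialFunctions

theorem eval_mem (P : MvPolynomial σ K) :
    (fun x => eval x P) ∈ mvPolynomialFunctions σ K :=
  ⟨P, funext fun x => by simp⟩

theorem injective_pi_aeval [Infinite K] :
    Function.Injective (AlgHom.pi fun x : σ → K => aeval (R := K) x) := fun P Q h =>
  MvPolynomial.funext fun x => by simpa [coe_aeval_eq_eval] using congrFun h x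

instance [Infinite K] : IsDomain (mvPolynomialFunctions σ K) :=
  (AlgEquiv.ofInjective _ injective_pi_aeval).symm.toMulEquiv.isDomain

theorem exists_ne_zero_and_ne_zero [Infinite K] {f g : (σ → K) → K}
    (hf : f ∈ mvPolynomialFunctions σ K) (hg : g ∈ mvPolynomialFunctions σ K)
    {a b : σ → K} (ha : f a ≠ 0) (hb : g b ≠ 0) : ∃ x, f x ≠ 0 ∧ g x ≠ 0 := by
  have hfg : (⟨f, hf⟩ * ⟨g, hg⟩ : mvPolynomialFunctions σ K) ≠ 0 :=
    mul_ne_zero (fun h => ha (congrFun (congrArg Subtype.val h) a))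
      (fun h => hb (congrFun (congrArg Subtype.val h) b))
  obtain ⟨x, hx⟩ := Function.ne_iff.1 (Subtype.coe_injective.ne hfg)
  exact ⟨x, mul_ne_zero_iff.1 hx⟩

theorem eval_comp_mem {ι : Type*} (P : MvPolynomial ι K) {c : ι → (σ → K) → K}
    (hc : ∀ i, c i ∈ mvPolynomialFunctions σ K) :
    (fun x => eval (fun i => c i x) P) ∈ mvPolynomialFunctions σ K := by
  induction P using MvPolynomial.induction_on with
  | C a =>
    simp only [eval_C]
    exact (mvPolynomialFunctions σ K).algebraMap_mem a
  | add P Q hP hQ =>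
    simp only [map_add]
    exact add_mem hP hQ
  | mul_X P i hP =>
    simp only [map_mul, eval_X]
    exact mul_mem hP (hc i)

theorem det_pencil_mem {ι : Type*} [Fintype ι] [DecidableEq ι] (A B : Matrix ι ι K) :
    (fun x : Fin 2 → K => (x 0 • A + x 1 • B).det) ∈ mvPolynomialFunctions (Fin 2) K := by
  convert eval_mem (Matrix.of fun i j => (X 0 * C (A i j) + X 1 * C (B i j) :
    MvPolynomial (Fin 2) K)).det using 1
  funext x
  rw [RingHom.map_det]
  congr 1
  ext i j
  simp

end mvPolynomialFunctions
end PolynomialFunctions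

namespace exteriorPower

theorem coe_map {R M N : Type*} [CommRing R] [AddCommGroup M] [Module R M] [AddCommGroup N]
    [Module R N] {p : ℕ} (f : M →ₗ[R] N) (y : ⋀[R]^p M) :
    (map p f y : ExteriorAlgebra R N) = ExteriorAlgebra.map f y := by
  refine LinearMap.congr_fun (f := (⋀[R]^p N).subtype ∘ₗ map p f)
    (g := (ExteriorAlgebra.map f).toLinearMap ∘ₗ (⋀[R]^p M).subtype) ?_ y
  refine LinearMap.ext_on_range (ιMulti_span R p M) fun v => ?_
  simp [ExteriorAlgebra.map_apply_ιMulti]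

open Module

theorem basis_repr_map {R M N I J : Type*} [CommRing R] [AddCommGroup M] [Module R M]
    [AddCommGroup N] [Module R N] [LinearOrder I] [Fintype I] [LinearOrder J] [Fintype J]
    {p : ℕ} (b : Basis I R M) (b' : Basis J R N) (h : M →ₗ[R] N) (y : ⋀[R]^p M)
    (s : Set.powersetCard J p) :
    (b'.exteriorPower p).repr (map p h y) s =
      ∑ t, (b.exteriorPower p).repr y t * ((LinearMap.toMatrix b b' h).submatrix
        (Set.powersetCard.ofFinEmbEquiv.symm s) (Set.powersetCard.ofFinEmbEquiv.symm t)).det := by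
  conv_lhs => rw [← (b.exteriorPower p).sum_repr y]
  simp only [map_sum, map_smul, Finsupp.coe_finsetSum, Finsupp.coe_smul, Finset.sum_apply,
    Pi.smul_apply, smul_eq_mul, basis_apply, map_apply_ιMulti_family, basis_repr_apply]
  refine Finset.sum_congr rfl fun t _ => ?_
  rw [← Matrix.det_transpose, ιMulti_family, ιMultiDual_apply_ιMulti]
  congr 2
  ext i j
  simp [LinearMap.toMatrix_apply]

variable {K M : Type*} [Field K] [AddCommGroup M] [Module K M] {p : ℕ}

theorem repr_map_pencil_mem {I : Type*} [LinearOrder I] [Fintype I] (b : Basis I K M)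
    (f g : M →ₗ[K] M) (y : ⋀[K]^p M) (s : Set.powersetCard I p) :
    (fun x : Fin 2 → K => (b.exteriorPower p).repr (map p (x 0 • f + x 1 • g) y) s) ∈
      mvPolynomialFunctions (Fin 2) K := by
  simp_rw [basis_repr_map b b, map_add, map_smul, Matrix.submatrix_add, Matrix.submatrix_smul]
  rw [← Finset.sum_fn]
  exact sum_mem fun t _ => Subalgebra.smul_mem _ (mvPolynomialFunctions.det_pencil_mem _ _) _

end exteriorPower

section Coordinates

variable {K : Type*} [Field K] {n p : ℕ}

theorem coe_basisFun_exteriorPower_apply (s : Set.powersetCard (Fin n) p) :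
    ((Pi.basisFun K (Fin n)).exteriorPower p s : ExteriorAlgebra K (Fin n → K)) =
      eWedge K n s := by
  rw [exteriorPower.basis_apply, exteriorPower.ιMulti_family_apply_coe,
    ExteriorAlgebra.ιMulti_family, ExteriorAlgebra.ιMulti_apply, eWedge]
  congr 1
  apply List.ext_getElem
  · simp
  · intro i _ _
    simp only [Set.powersetCard.ofFinEmbEquiv_symm_apply, Function.comp_apply, Pi.basisFun_apply,
      List.getElem_ofFn, List.getElem_map, ExteriorAlgebra.ι_inj]
    rfl

noncomputable def wedgeCoord (y : ⋀[K]^p (Fin n → K)) (I : Finset (Fin n)) : K :=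
  if h : I.card = p then ((Pi.basisFun K (Fin n)).exteriorPower p).repr y ⟨I, h⟩ else 0

theorem sum_wedgeCoord_smul_eWedge (y : ⋀[K]^p (Fin n → K)) :
    ∑ I ∈ Finset.powersetCard p Finset.univ, wedgeCoord y I • eWedge K n I = y := by
  rw [Finset.sum_subtype (p := (· ∈ Set.powersetCard (Fin n) p)) _
    fun I => by simp [Set.powersetCard.mem_iff]]
  conv_rhs => rw [← ((Pi.basisFun K (Fin n)).exteriorPower p).sum_repr y]
  rw [Submodule.coe_sum]
  refine Finset.sum_congr rfl fun s _ => ?_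
  rw [wedgeCoord, dif_pos (Set.powersetCard.mem_iff.1 s.2), Submodule.coe_smul,
    coe_basisFun_exteriorPower_apply]

theorem apply_map_pencil_mem {F : ExteriorAlgebra K (Fin n → K) → K}
    {P : MvPolynomial (Finset (Fin n)) K}
    (hF : ∀ c : Finset (Fin n) → K,
      F (∑ I ∈ Finset.powersetCard p Finset.univ, c I • eWedge K n I) = eval c P)
    (f g : (Fin n → K) →ₗ[K] (Fin n → K)) {ω : ExteriorAlgebra K (Fin n → K)}
    (hω : ω ∈ ⋀[K]^p (Fin n → K)) :
    (fun x : Fin 2 → K => F (ExteriorAlgebra.map (x 0 • f + x 1 • g) ω)) ∈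
      mvPolynomialFunctions (Fin 2) K := by
  have hcoord : ∀ x : Fin 2 → K, F (ExteriorAlgebra.map (x 0 • f + x 1 • g) ω) =
      eval (fun I => wedgeCoord (exteriorPower.map p (x 0 • f + x 1 • g) ⟨ω, hω⟩) I) P := by
    intro x
    rw [← hF, sum_wedgeCoord_smul_eWedge, exteriorPower.coe_map]
  simp_rw [hcoord]
  refine mvPolynomialFunctions.eval_comp_mem P fun I => ?_
  by_cases hI : I.card = p
  · simp only [wedgeCoord, dif_pos hI]
    exact exteriorPower.repr_map_pencil_mem _ f g _ _
  · simp only [wedgeCoord, dif_neg hI]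
    exact zero_mem _

end Coordinates

theorem exists_combination_both_nonzero_general (K : Type*) [Field K] [Infinite K]
    (n p : ℕ)
    (ω : ExteriorAlgebra K (Fin n → K)) (hω : ω ∈ ⋀[K]^p (Fin n → K))
    (F₁ F₂ : ExteriorAlgebra K (Fin n → K) → K)
    (P₁ P₂ : MvPolynomial (Finset (Fin n)) K)
    (hF₁ : ∀ c : Finset (Fin n) → K,
      F₁ (∑ I ∈ Finset.powersetCard p (Finset.univ : Finset (Fin n)), c I • eWedge K n I) =
        MvPolynomial.eval c P₁)
    (hF₂ : ∀ c : Finset (Fin n) → K,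
      F₂ (∑ I ∈ Finset.powersetCard p (Finset.univ : Finset (Fin n)), c I • eWedge K n I) =
        MvPolynomial.eval c P₂)
    (g₁ g₂ : (Fin n → K) ≃ₗ[K] (Fin n → K))
    (h₁ : F₁ (ExteriorAlgebra.map (g₁ : (Fin n → K) →ₗ[K] (Fin n → K)) ω) ≠ 0)
    (h₂ : F₂ (ExteriorAlgebra.map (g₂ : (Fin n → K) →ₗ[K] (Fin n → K)) ω) ≠ 0) :
    ∃ lam mu : K,
      Function.Bijective
        (lam • (g₁ : (Fin n → K) →ₗ[K] (Fin n → K)) +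
          mu • (g₂ : (Fin n → K) →ₗ[K] (Fin n → K))) ∧
      F₁ (ExteriorAlgebra.map
        (lam • (g₁ : (Fin n → K) →ₗ[K] (Fin n → K)) +
          mu • (g₂ : (Fin n → K) →ₗ[K] (Fin n → K))) ω) ≠ 0 ∧
      F₂ (ExteriorAlgebra.map
        (lam • (g₁ : (Fin n → K) →ₗ[K] (Fin n → K)) +
          mu • (g₂ : (Fin n → K) →ₗ[K] (Fin n → K))) ω) ≠ 0 := by
  set g : (Fin 2 → K) → (Fin n → K) →ₗ[K] (Fin n → K) := fun x => x 0 • g₁ + x 1 • g₂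
  have hdet : (fun x => LinearMap.det (g x)) ∈ mvPolynomialFunctions (Fin 2) K := by
    simpa [g, ← LinearMap.det_toMatrix'] using mvPolynomialFunctions.det_pencil_mem
      (LinearMap.toMatrix' (g₁ : (Fin n → K) →ₗ[K] (Fin n → K)))
      (LinearMap.toMatrix' (g₂ : (Fin n → K) →ₗ[K] (Fin n → K)))
  have hF₁f := apply_map_pencil_mem hF₁ g₁ g₂ hω
  have hF₂f := apply_map_pencil_mem hF₂ g₁ g₂ hω
  obtain ⟨x, hx₁, hx₂⟩ := mvPolynomialFunctions.exists_ne_zero_and_ne_zero hF₁f hF₂f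
    (a := ![1, 0]) (b := ![0, 1]) (by simpa using h₁) (by simpa using h₂)
  obtain ⟨y, hy, hy₁₂⟩ := mvPolynomialFunctions.exists_ne_zero_and_ne_zero hdet (mul_mem hF₁f hF₂f)
    (a := ![1, 0]) (by simpa [g] using g₁.isUnit_det'.ne_zero) (mul_ne_zero hx₁ hx₂)
  obtain ⟨hy₁, hy₂⟩ := mul_ne_zero_iff.1 hy₁₂
  exact ⟨y 0, y 1, (Module.End.isUnit_iff _).1 ((LinearMap.isUnit_iff_isUnit_det _).2
    (isUnit_iff_ne_zero.2 hy)), hy₁, hy₂⟩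

/-- Let `K` be an infinite field, `ω ∈ ⋀^p K^n`, and let `F₁, F₂` be
polynomial functions on `⋀^p K^n` (given on coordinates by polynomials `P₁, P₂`). If there
are `g₁, g₂ ∈ GL_n(K)` with `F₁((⋀^p g₁)(ω)) ≠ 0` and `F₂((⋀^p g₂)(ω)) ≠ 0`, then there are
scalars `λ, μ` such that `g = λ·g₁ + μ·g₂` is invertible and simultaneously
`F₁((⋀^p g)(ω)) ≠ 0` and `F₂((⋀^p g)(ω)) ≠ 0`. -/
theorem exists_combination_both_nonzero (K : Type*) [Field K] [Infinite K]
    (n p : ℕ) (hn : 1 ≤ n) (hp : 1 ≤ p)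
    (ω : ExteriorAlgebra K (Fin n → K)) (hω : ω ∈ ⋀[K]^p (Fin n → K))
    (F₁ F₂ : ExteriorAlgebra K (Fin n → K) → K)
    (P₁ P₂ : MvPolynomial (Finset (Fin n)) K)
    (hF₁ : ∀ c : Finset (Fin n) → K,
      F₁ (∑ I ∈ Finset.powersetCard p (Finset.univ : Finset (Fin n)), c I • eWedge K n I) =
        MvPolynomial.eval c P₁)
    (hF₂ : ∀ c : Finset (Fin n) → K,
      F₂ (∑ I ∈ Finset.powersetCard p (Finset.univ : Finset (Fin n)), c I • eWedge K n I) =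
        MvPolynomial.eval c P₂)
    (g₁ g₂ : (Fin n → K) ≃ₗ[K] (Fin n → K))
    (h₁ : F₁ (ExteriorAlgebra.map (g₁ : (Fin n → K) →ₗ[K] (Fin n → K)) ω) ≠ 0)
    (h₂ : F₂ (ExteriorAlgebra.map (g₂ : (Fin n → K) →ₗ[K] (Fin n → K)) ω) ≠ 0) :
    ∃ lam mu : K,
      Function.Bijective
        (lam • (g₁ : (Fin n → K) →ₗ[K] (Fin n → K)) +
          mu • (g₂ : (Fin n → K) →ₗ[K] (Fin n → K))) ∧
      F₁ (ExteriorAlgebra.map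
        (lam • (g₁ : (Fin n → K) →ₗ[K] (Fin n → K)) +
          mu • (g₂ : (Fin n → K) →ₗ[K] (Fin n → K))) ω) ≠ 0 ∧
      F₂ (ExteriorAlgebra.map
        (lam • (g₁ : (Fin n → K) →ₗ[K] (Fin n → K)) +
          mu • (g₂ : (Fin n → K) →ₗ[K] (Fin n → K))) ω) ≠ 0 :=
  exists_combination_both_nonzero_general K n p ω hω F₁ F₂ P₁ P₂ hF₁ hF₂ g₁ g₂ h₁ h₂
end

section
/- Let K be a field of characteristic 0, let V be a finite-dimensional K-vector space, let v ∈ ⋀² V, and let l ≥ 0. Then v^{∧(l+1)} = 0 in ⋀^{2(l+1)} V if and only if there exist vectors u₁,…,u_l, w₁,…,w_l ∈ V with v = u₁∧w₁ + ⋯ + u_l∧w_l. That is, a bivector has nilpotency degree at most l+1 exactly when it has rank at most l, so the rank filtration on ⋀²V coincides with the filtration by Pfaffian varieties. -/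
/-!
Each `u ∧ w` squares to zero and bivectors commute with each other, so for a bivector `s`,
`(s + u ∧ w) ^ (k + 1) = s ^ (k + 1) + (k + 1) • s ^ k * (u ∧ w)`; by induction a sum of
`l` decomposable bivectors has vanishing `(l + 1)`-st power.

Conversely, let `v ≠ 0` with `v ^ (l + 2) = 0`. Contraction `d ⌋ ·` by a covector is an
antiderivation, and `d ⌋ v` is a vector `x`; it is nonzero for some `d`, because
`2 • v = ∑ₚ eₚ ∧ (eₚ* ⌋ v)` for a basis `e`. Contracting `v ^ (l + 2) = 0` with `d` gives
`(l + 2) • x ∧ v ^ (l + 1) = 0`, hence `x ∧ v ^ (l + 1) = 0` in characteristic zero; contracting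
this with `d'` such that `d' x = 1` gives `v ^ (l + 1) = (l + 1) • x ∧ y ∧ v ^ l` with
`y = d' ⌋ v`. By the binomial formula above `(v - x ∧ y) ^ (l + 1) = 0`, and induction applies
to `v - x ∧ y`.
-/

theorem Commute.add_pow_succ_of_sq_eq_zero {A : Type*} [Semiring A] {x y : A}
    (hxy : Commute x y) (hy : y ^ 2 = 0) (n : ℕ) :
    (x + y) ^ (n + 1) = x ^ (n + 1) + (n + 1) • (x ^ n * y) := by
  induction n with
  | zero => simp
  | succ n ih =>
    have hyx : x ^ n * y * x = x ^ (n + 1) * y := by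
      rw [mul_assoc, hxy.symm.eq, ← mul_assoc, ← pow_succ]
    have hyy : x ^ n * y * y = 0 := by rw [mul_assoc, ← sq, hy, mul_zero]
    rw [pow_succ, ih, add_mul, mul_add, smul_mul_assoc, mul_add, hyx, hyy,
      add_zero, ← pow_succ, add_assoc, ← succ_nsmul']

open CliffordAlgebra (contractLeft contractLeft_ι_mul contractLeft_one)

namespace ExteriorAlgebra

variable {R V : Type*} [CommRing R] [AddCommGroup V] [Module R V] {N : ℕ}

theorem ι_mul_ι_comm (x y : V) : ι R x * ι R y = -(ι R y * ι R x) :=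
  eq_neg_of_add_eq_zero_left (ι_add_mul_swap x y)

theorem ι_mul_ι_sq (x y : V) : (ι R x * ι R y) ^ 2 = 0 := by
  rw [sq, mul_assoc, ← mul_assoc (ι R y), ι_mul_ι_comm y x, neg_mul, mul_neg, ← mul_assoc,
    ← mul_assoc, ι_sq_zero, zero_mul, zero_mul, neg_zero]

theorem commute_ι_mul_ι_ι (x y m : V) : Commute (ι R x * ι R y) (ι R m) := by
  rw [Commute, SemiconjBy, mul_assoc, ι_mul_ι_comm y m, mul_neg, ← mul_assoc, ι_mul_ι_comm x m,
    neg_mul, neg_neg, mul_assoc]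

variable (R) in
def bivector (a b : Fin N → V) : ExteriorAlgebra R V :=
  ∑ i, ι R (a i) * ι R (b i)

def contractVec (d : Module.Dual R V) (a b : Fin N → V) : V :=
  ∑ i, (d (a i) • b i - d (b i) • a i)

theorem bivector_snoc (a b : Fin N → V) (x y : V) :
    bivector R (Fin.snoc a x : Fin (N + 1) → V) (Fin.snoc b y) =
      bivector R a b + ι R x * ι R y := by
  simp [bivector, Fin.sum_univ_castSucc]

theorem commute_bivector_ι (a b : Fin N → V) (m : V) : Commute (bivector R a b) (ι R m) :=
  Commute.sum_left _ _ _ fun i _ => commute_ι_mul_ι_ι (a i) (b i) m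

theorem commute_bivector_ι_mul_ι (a b : Fin N → V) (x y : V) :
    Commute (bivector R a b) (ι R x * ι R y) :=
  (commute_bivector_ι a b x).mul_right (commute_bivector_ι a b y)

theorem bivector_pow_eq_zero (l : ℕ) (u w : Fin l → V) : bivector R u w ^ (l + 1) = 0 := by
  induction l with
  | zero => simp [bivector]
  | succ l ih =>
    rw [← Fin.snoc_init_self u, ← Fin.snoc_init_self w, bivector_snoc,
      (commute_bivector_ι_mul_ι _ _ _ _).add_pow_succ_of_sq_eq_zero (ι_mul_ι_sq _ _),
      pow_succ, ih, zero_mul, zero_mul, smul_zero, add_zero]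

theorem contractLeft_ι_mul_ι_mul (d : Module.Dual R V) (x y : V) (z : ExteriorAlgebra R V) :
    contractLeft d (ι R x * ι R y * z) =
      ι R (d x • y - d y • x) * z + ι R x * ι R y * contractLeft d z := by
  rw [mul_assoc, contractLeft_ι_mul, contractLeft_ι_mul]
  simp only [map_sub, map_smul, mul_sub, sub_mul, smul_mul_assoc, mul_smul_comm, mul_assoc]
  abel

theorem contractLeft_bivector_mul (d : Module.Dual R V) (a b : Fin N → V)
    (z : ExteriorAlgebra R V) :
    contractLeft d (bivector R a b * z) =
      ι R (contractVec d a b) * z + bivector R a b * contractLeft d z := by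
  simp only [bivector, contractVec, Finset.sum_mul, map_sum, contractLeft_ι_mul_ι_mul,
    Finset.sum_add_distrib]

theorem contractLeft_bivector_pow (d : Module.Dual R V) (a b : Fin N → V) (k : ℕ) :
    contractLeft d (bivector R a b ^ (k + 1)) =
      (k + 1) • (ι R (contractVec d a b) * bivector R a b ^ k) := by
  induction k with
  | zero =>
    simpa [contractLeft_one] using contractLeft_bivector_mul d a b 1
  | succ k ih =>
    rw [pow_succ' _ (k + 1), contractLeft_bivector_mul, ih, mul_smul_comm, ← mul_assoc,
      (commute_bivector_ι a b _).eq, mul_assoc, ← pow_succ']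
    exact (succ_nsmul' _ _).symm

theorem exists_eq_bivector_of_mem {v : ExteriorAlgebra R V} (hv : v ∈ ⋀[R]^2 V) :
    ∃ (N : ℕ) (a b : Fin N → V), v = bivector R a b := by
  rw [exteriorPower, sq] at hv
  refine Submodule.mul_induction_on hv ?_ ?_
  · rintro _ ⟨x, rfl⟩ _ ⟨y, rfl⟩
    exact ⟨1, fun _ => x, fun _ => y, by simp [bivector]⟩
  · rintro _ _ ⟨N₁, a₁, b₁, rfl⟩ ⟨N₂, a₂, b₂, rfl⟩
    exact ⟨N₁ + N₂, Fin.append a₁ a₂, Fin.append b₁ b₂, by simp [bivector, Fin.sum_univ_add]⟩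

theorem ι_mul_ι_mem (x y : V) : ι R x * ι R y ∈ ⋀[R]^2 V := by
  rw [exteriorPower, sq]
  exact Submodule.mul_mem_mul ⟨x, rfl⟩ ⟨y, rfl⟩

theorem sum_coord_smul_ι_mul {n : Type*} [Fintype n] (e : Module.Basis n R V) (x y : V) :
    ∑ p, e.coord p x • (ι R (e p) * ι R y) = ι R x * ι R y := by
  simp only [← smul_mul_assoc, ← Finset.sum_mul, Module.Basis.coord_apply, ← map_smul,
    ← map_sum, e.sum_repr]

theorem two_smul_bivector_eq_sum_basis {n : Type*} [Fintype n] (e : Module.Basis n R V)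
    (a b : Fin N → V) :
    (2 : R) • bivector R a b = ∑ p, ι R (e p) * ι R (contractVec (e.coord p) a b) := by
  calc (2 : R) • bivector R a b
      = ∑ i, (ι R (a i) * ι R (b i) - ι R (b i) * ι R (a i)) := by
        simp only [bivector, Finset.smul_sum, two_smul, ι_mul_ι_comm (b _), sub_neg_eq_add]
    _ = ∑ i, ∑ p, (e.coord p (a i) • (ι R (e p) * ι R (b i))
          - e.coord p (b i) • (ι R (e p) * ι R (a i))) := by
        simp only [Finset.sum_sub_distrib, sum_coord_smul_ι_mul]
    _ = _ := by
        simp only [contractVec, map_sum, map_sub, map_smul, Finset.mul_sum, mul_sub,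
          mul_smul_comm]
        exact Finset.sum_comm

theorem bivector_pow_eq_nsmul_of_ι_mul_pow_eq_zero (d : Module.Dual R V) {a b : Fin N → V}
    {w : V} (hw : d w = 1) {l : ℕ} (h : ι R w * bivector R a b ^ (l + 1) = 0) :
    bivector R a b ^ (l + 1) =
      (l + 1) • (ι R w * ι R (contractVec d a b) * bivector R a b ^ l) := by
  have := congrArg (contractLeft d) h
  rw [map_zero, contractLeft_ι_mul, contractLeft_bivector_pow, hw, one_smul, sub_eq_zero] at this
  rw [this, mul_smul_comm, mul_assoc]

theorem pow_sub_ι_mul_ι_eq_zero (d : Module.Dual R V) {a b : Fin N → V}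
    {w : V} (hw : d w = 1) {l : ℕ} (h : ι R w * bivector R a b ^ (l + 1) = 0) :
    (bivector R a b - ι R w * ι R (contractVec d a b)) ^ (l + 1) = 0 := by
  have hc := (commute_bivector_ι_mul_ι (R := R) a b w (contractVec d a b)).neg_right
  rw [sub_eq_add_neg, hc.add_pow_succ_of_sq_eq_zero (by rw [neg_sq, ι_mul_ι_sq]),
    bivector_pow_eq_nsmul_of_ι_mul_pow_eq_zero d hw h, mul_neg, smul_neg,
    (commute_bivector_ι_mul_ι a b w _).symm.pow_right l |>.eq, add_neg_cancel]

section Field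

variable {K : Type*} [Field K] [Module K V]

theorem bivector_eq_zero_of_forall_contractVec_eq_zero [NeZero (2 : K)] [FiniteDimensional K V]
    {a b : Fin N → V} (h : ∀ d : Module.Dual K V, contractVec d a b = 0) :
    bivector K a b = 0 := by
  simpa [h, two_ne_zero] using two_smul_bivector_eq_sum_basis (Module.finBasis K V) a b

theorem ι_contractVec_mul_bivector_pow_eq_zero [CharZero K] (d : Module.Dual K V)
    {a b : Fin N → V} {l : ℕ} (h : bivector K a b ^ (l + 2) = 0) :
    ι K (contractVec d a b) * bivector K a b ^ (l + 1) = 0 := by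
  have := contractLeft_bivector_pow d a b (l + 1)
  rw [h, map_zero, eq_comm, ← Nat.cast_smul_eq_nsmul K] at this
  exact (smul_eq_zero.mp this).resolve_left (by exact_mod_cast Nat.succ_ne_zero (l + 1))

theorem exists_eq_bivector_of_pow_eq_zero [CharZero K] [FiniteDimensional K V] (l : ℕ)
    {v : ExteriorAlgebra K V} (hv : v ∈ ⋀[K]^2 V) (h : v ^ (l + 1) = 0) :
    ∃ u w : Fin l → V, v = bivector K u w := by
  induction l generalizing v with
  | zero => exact ⟨Fin.elim0, Fin.elim0, by simpa [bivector] using h⟩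
  | succ l ih =>
    obtain ⟨N, a, b, rfl⟩ := exists_eq_bivector_of_mem hv
    by_cases hzero : ∀ d : Module.Dual K V, contractVec d a b = 0
    · exact ⟨0, 0, by rw [bivector_eq_zero_of_forall_contractVec_eq_zero hzero]; simp [bivector]⟩
    obtain ⟨d, hd⟩ := not_forall.mp hzero
    obtain ⟨d', hd'⟩ := Module.Projective.exists_dual_eq_one K hd
    have hnext := pow_sub_ι_mul_ι_eq_zero d' hd' (ι_contractVec_mul_bivector_pow_eq_zero d h)
    obtain ⟨u, w, huw⟩ := ih (sub_mem hv (ι_mul_ι_mem _ _)) hnext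
    exact ⟨Fin.snoc u (contractVec d a b), Fin.snoc w (contractVec d' a b),
      by rw [bivector_snoc, ← huw, sub_add_cancel]⟩

end Field

end ExteriorAlgebra

/-- A bivector `v ∈ ⋀² V` over a finite-dimensional space in
characteristic zero satisfies `v^{∧(l+1)} = 0` iff `v` has rank at most `l`, i.e. iff
`v = u₁∧w₁ + ⋯ + u_l∧w_l` for some vectors `u_i, w_i ∈ V`. -/
theorem bivector_pow_eq_zero_iff_rank_le (K V : Type*) [Field K] [CharZero K]
    [AddCommGroup V] [Module K V] [FiniteDimensional K V]
    (l : ℕ) (v : ExteriorAlgebra K V) (hv : v ∈ ⋀[K]^2 V) :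
    v ^ (l + 1) = 0 ↔
      ∃ u w : Fin l → V,
        v = ∑ i, ExteriorAlgebra.ι K (u i) * ExteriorAlgebra.ι K (w i) :=
  ⟨ExteriorAlgebra.exists_eq_bivector_of_pow_eq_zero l hv,
    fun ⟨u, w, hvuw⟩ => hvuw ▸ ExteriorAlgebra.bivector_pow_eq_zero l u w⟩
end

section
/- Let K be a field and let e₁,…,e₇ be the standard basis of K⁷. The trivector e₁∧e₂∧e₃ + e₄∧e₅∧e₆ ∈ ⋀³ K⁷ cannot be written in the form β ∧ v for any bivector β ∈ ⋀² K⁷ and any vector v ∈ K⁷. In particular, it is not of the form (ν₁ + ν₂) ∧ v with ν₁, ν₂ decomposable bivectors. -/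
/-!
Write `ω = e₁∧e₂∧e₃ + e₄∧e₅∧e₆`. If `ω = β ∧ v` then `ω ∧ v = 0`, since `v ∧ v = 0`. Reading off
the 4×4 minors of `ω ∧ v` on the columns `{4,5,6,i}` (for `i ≤ 3`) and `{1,2,3,i}` (for `i ≥ 4`)
gives `vᵢ = 0` for every `i`, so `v = 0` and hence `ω = 0`, which its minor on `{1,2,3}` refutes.
-/

/-- The standard basis vector `e_i` of `K⁷` inside the exterior algebra. -/
noncomputable def e7 (K : Type*) [Field K] (i : Fin 7) : ExteriorAlgebra K (Fin 7 → K) :=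
  ExteriorAlgebra.ι K (Pi.single i 1)

namespace ExteriorAlgebra

variable {R M σ : Type*} [CommRing R] [AddCommGroup M] [Module R M]

theorem ι_mul_ι_mul_ι (a b c : M) : ι R a * ι R b * ι R c = ιMulti R 3 ![a, b, c] := by
  simp [ιMulti_apply, mul_assoc]

theorem ι_mul_ι_mul_ι_mul_ι (a b c d : M) :
    ι R a * ι R b * ι R c * ι R d = ιMulti R 4 ![a, b, c, d] := by
  simp [ιMulti_apply, mul_assoc]

theorem mul_ι_mul_ι_self (x : ExteriorAlgebra R M) (m : M) : x * ι R m * ι R m = 0 := by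
  rw [mul_assoc, ι_sq_zero, mul_zero]

variable (R) in
/-- The Plücker coordinate on the columns `S`; it vanishes outside degree `n`. -/
noncomputable def minor (n : ℕ) (S : Fin n → σ) : ExteriorAlgebra R (σ → R) →ₗ[R] R :=
  liftAlternating (Pi.single n (Matrix.detRowAlternating.compLinearMap (LinearMap.funLeft R R S)))

theorem minor_ιMulti {n : ℕ} (S : Fin n → σ) (w : Fin n → σ → R) :
    minor R n S (ιMulti R n w) = (Matrix.of fun i j => w i (S j)).det := by
  rw [minor, liftAlternating_apply_ιMulti, Pi.single_eq_same]
  rfl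

end ExteriorAlgebra

open ExteriorAlgebra

section Trivector

variable (K : Type*) [Field K]

-- `e₁∧e₂∧e₃ + e₄∧e₅∧e₆`, with the basis indexed from `0`.
noncomputable abbrev trivector : ExteriorAlgebra K (Fin 7 → K) :=
  e7 K 0 * e7 K 1 * e7 K 2 + e7 K 3 * e7 K 4 * e7 K 5

theorem minor_trivector : minor K 3 ![0, 1, 2] (trivector K) = 1 := by
  simp only [trivector, e7, ι_mul_ι_mul_ι, map_add, minor_ιMulti]
  simp [Matrix.det_succ_row_zero, Fin.sum_univ_succ, Pi.single_apply]

theorem trivector_ne_zero : trivector K ≠ 0 := fun h => by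
  simpa [h] using minor_trivector K

variable {K}

theorem minor_trivector_mul_ι_of_lt (v : Fin 7 → K) {i : Fin 7} (hi : i < 3) :
    minor K 4 ![3, 4, 5, i] (trivector K * ι K v) = v i := by
  simp only [trivector, e7, add_mul, ι_mul_ι_mul_ι_mul_ι, map_add, minor_ιMulti]
  fin_cases i <;> simp_all [Matrix.det_succ_row_zero, Fin.sum_univ_succ, Pi.single_apply]

theorem minor_trivector_mul_ι_of_ge (v : Fin 7 → K) {i : Fin 7} (hi : 3 ≤ i) :
    minor K 4 ![0, 1, 2, i] (trivector K * ι K v) = v i := by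
  simp only [trivector, e7, add_mul, ι_mul_ι_mul_ι_mul_ι, map_add, minor_ιMulti]
  fin_cases i <;> simp_all [Matrix.det_succ_row_zero, Fin.sum_univ_succ, Pi.single_apply]

theorem eq_zero_of_trivector_mul_ι_eq_zero {v : Fin 7 → K} (h : trivector K * ι K v = 0) :
    v = 0 := by
  funext i
  rcases lt_or_ge i 3 with hi | hi
  · rw [← minor_trivector_mul_ι_of_lt v hi, h, map_zero, Pi.zero_apply]
  · rw [← minor_trivector_mul_ι_of_ge v hi, h, map_zero, Pi.zero_apply]

theorem trivector_ne_mul_ι (β : ExteriorAlgebra K (Fin 7 → K)) (v : Fin 7 → K) :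
    trivector K ≠ β * ι K v := by
  intro h
  have hv : v = 0 := eq_zero_of_trivector_mul_ι_eq_zero (by rw [h, mul_ι_mul_ι_self])
  exact trivector_ne_zero K (by rw [h, hv, map_zero, mul_zero])

end Trivector

/-- The trivector `e₁∧e₂∧e₃ + e₄∧e₅∧e₆ ∈ ⋀³ K⁷` cannot be written in the
form `β ∧ v` for any bivector `β ∈ ⋀² K⁷` and any vector `v ∈ K⁷`. In particular, it is not
of the form `(ν₁ + ν₂) ∧ v` with `ν₁, ν₂` decomposable bivectors. -/
theorem trivector_not_bivector_wedge_vector (K : Type*) [Field K] :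
    (¬ ∃ (β : ExteriorAlgebra K (Fin 7 → K)) (v : Fin 7 → K),
      β ∈ ⋀[K]^2 (Fin 7 → K) ∧
      e7 K 0 * e7 K 1 * e7 K 2 + e7 K 3 * e7 K 4 * e7 K 5 = β * ExteriorAlgebra.ι K v) ∧
    (¬ ∃ u₁ w₁ u₂ w₂ v : Fin 7 → K,
      e7 K 0 * e7 K 1 * e7 K 2 + e7 K 3 * e7 K 4 * e7 K 5 =
        (ExteriorAlgebra.ι K u₁ * ExteriorAlgebra.ι K w₁ +
          ExteriorAlgebra.ι K u₂ * ExteriorAlgebra.ι K w₂) * ExteriorAlgebra.ι K v) :=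
  ⟨fun ⟨β, v, _, h⟩ => trivector_ne_mul_ι β v h,
    fun ⟨_, _, _, _, v, h⟩ => trivector_ne_mul_ι _ v h⟩
end
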